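/- arXiv:math/0206225 — 2 statements merged into one kernel-verified Lean document; each statement's English description precedes it below -/
import Mathlib

section
/- Let λ be a strict partition. Then (1) there exist strict partitions λ^{bc(3)} and λ^b[0] such that D(λ^{bc(3)}) equals the 3-core of D(λ) and D(λ^b[0]) equals the 3-quotient component D(λ)[0]; and (2) the 3-quotient component D(λ)[2] is the conjugate partition of D(λ)[1]. -/
open scoped BigOperators

/-- A partition, represented canonically as the multiset of its (positive) parts. -/
structure Ptn where
  parts : Multiset ℕ
  pos : ∀ x ∈ parts, 0 < x

namespace Ptn

/-- Build a partition from an arbitrary multiset of naturals by discarding zero parts. -/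
def of (s : Multiset ℕ) : Ptn :=
  ⟨s.filter (fun x => 0 < x), fun _ hx => (Multiset.mem_filter.mp hx).2⟩

/-- The empty partition. -/
def empty : Ptn := ⟨0, by simp⟩

/-- The `i`-th largest part (`0`-indexed); `0` if `i` is at least the number of parts. -/
def part (l : Ptn) (i : ℕ) : ℕ :=
  ((l.parts.sort (· ≤ ·)).reverse).getD i 0

/-- The number of (positive) parts. -/
def length (l : Ptn) : ℕ := Multiset.card l.parts

/-- The size `|λ|`, i.e. the number being partitioned. -/
def size (l : Ptn) : ℕ := l.parts.sum

/-- A partition is strict if all its parts are distinct. -/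
def Strict (l : Ptn) : Prop := l.parts.Nodup

/-- The conjugate partition. -/
def conj (l : Ptn) : Ptn :=
  of ((Multiset.range (l.part 0)).map
    (fun j => Multiset.card (l.parts.filter (fun x => j < x))))

end Ptn

/-- The rectangular partition `□(n,m)` with `n` rows of length `m`. -/
def rect (n m : ℕ) : Ptn := Ptn.of (Multiset.replicate n m)

/-- The partition obtained by multiplying every part by `r`. -/
def scaleP (r : ℕ) (l : Ptn) : Ptn := Ptn.of (l.parts.map (fun a => r * a))

/-- Diagram containment: every part of `small` is at most the corresponding part of `big`. -/
def Contains (big small : Ptn) : Prop := ∀ i, small.part i ≤ big.part i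

/-- The beta-set (first-column hook lengths) `{λ_i + m - 1 - i : i < m}` of `l`,
computed with `m` beads (`m` at least the number of parts). -/
def betaSet (l : Ptn) (m : ℕ) : Finset ℕ :=
  (Finset.range m).image (fun i => l.part i + (m - 1 - i))

/-- The partition encoded by a finite set of bead positions: each bead contributes a part
equal to the number of empty positions (holes) below it. -/
def ptnOfBeads (B : Finset ℕ) : Ptn :=
  Ptn.of (B.val.map (fun p => p - (B.filter (fun q => q < p)).card))

/-- Levels of the beads on runner `k` of the `r`-abacus of `l`,
drawn with `r * l.length` beads (a multiple of `r`). -/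
def runnerLevels (r : ℕ) (l : Ptn) (k : ℕ) : Finset ℕ :=
  (Finset.range (l.part 0 + r * l.length + 1)).filter
    (fun s => r * s + k ∈ betaSet l (r * l.length))

/-- The `k`-th component `λ[k]` of the `r`-quotient of `l`. -/
def quotP (r : ℕ) (l : Ptn) (k : ℕ) : Ptn := ptnOfBeads (runnerLevels r l k)

/-- The `r`-core of `l`: push all beads of the `r`-abacus down as far as possible. -/
def coreP (r : ℕ) (l : Ptn) : Ptn :=
  ptnOfBeads ((Finset.range r).biUnion
    (fun k => (Finset.range (runnerLevels r l k).card).image (fun s => r * s + k)))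

/-- The key of the bead at position `p` for the `r`-numbering of the beads `B`:
a bead which is the `j`-th lowest bead on runner `k` gets key `r * j + k`. -/
def rKey (r : ℕ) (B : Finset ℕ) (p : ℕ) : ℕ :=
  r * (B.filter (fun q => q % r = p % r ∧ q < p)).card + p % r

/-- The number of inversions between the natural (increasing-position) numbering of the
beads `B` and the numbering by increasing `key`. -/
def inversions (key : ℕ → ℕ) (B : Finset ℕ) : ℕ :=
  ((B ×ˢ B).filter (fun pq => pq.1 < pq.2 ∧ key pq.2 < key pq.1)).card

/-- Exponent of the `r`-sign `δ_r`. -/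
def rSignExp (r : ℕ) (l : Ptn) : ℕ :=
  inversions (rKey r (betaSet l (r * l.length))) (betaSet l (r * l.length))

/-- The `r`-sign `δ_r(λ) ∈ {±1}`. -/
def rSign (r : ℕ) (l : Ptn) : ℤ := (-1) ^ rSignExp r l

/-- The key of the bead at position `p` for the `3`-bar numbering of the beads `B` of the
`3`-bar abacus: first the beads of runner `0` in increasing order, then the pairs of beads
on runners `2` and `1` paired off by increasing level (runner-`2` bead before
runner-`1` bead), then the remaining unpaired beads in increasing order. -/
def barKey (B : Finset ℕ) (p : ℕ) : ℕ :=
  let n0 := (B.filter (fun q => q % 3 = 0)).card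
  let t := min ((B.filter (fun q => q % 3 = 1)).card)
              ((B.filter (fun q => q % 3 = 2)).card)
  let rk := (B.filter (fun q => q % 3 = p % 3 ∧ q < p)).card
  if p % 3 = 0 then rk
  else if rk < t then (if p % 3 = 2 then n0 + 2 * rk else n0 + 2 * rk + 1)
  else n0 + 2 * t + (rk - t)

/-- Exponent of the `3`-bar sign `δ̄_3`.  The beads of the `3`-bar abacus of a strict
partition sit at the positions given by the parts. -/
def barSignExp (l : Ptn) : ℕ :=
  inversions (barKey l.parts.toFinset) l.parts.toFinset

/-- The `3`-bar sign `δ̄_3(λ) ∈ {±1}` of a strict partition. -/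
def barSign3 (l : Ptn) : ℤ := (-1) ^ barSignExp l

/-- The double `D(λ) = (λ_1,…,λ_l | λ_1 - 1,…,λ_l - 1)` (Frobenius notation)
of a strict partition `λ`, constructed row by row. -/
noncomputable def double (l : Ptn) : Ptn :=
  Ptn.of ((Multiset.range (l.length + l.part 0)).map (fun i =>
    (if i < l.length then l.part i + 1 else 0) +
      ((Finset.range (min i l.length)).filter (fun j => i + 1 ≤ j + l.part j)).card))

/-- The second component `λ^b[1] = D(λ)[1]` of the `3`-bar quotient of a strict
partition `λ`. -/
noncomputable def barQuot1 (l : Ptn) : Ptn := quotP 3 (double l) 1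

/-- The staircase-like strict partition `Λ_ℓ = (3ℓ-2, 3ℓ-5, …, 7, 4, 1)`. -/
def LamP (ℓ : ℕ) : Ptn := Ptn.of ((Multiset.range ℓ).map (fun i => 3 * i + 1))

/-- The staircase partition `Δ_ℓ = (ℓ, ℓ-1, …, 1)`. -/
def DelP (ℓ : ℕ) : Ptn := Ptn.of (Multiset.range (ℓ + 1))

/-- `F_1^m(Λ_ℓ)`: strict partitions obtained from `Λ_ℓ` by adding `m` cells, each
labelled `1`, where the cell in (0-indexed) column `j` is labelled `1` iff `j % 3 = 1`
(each row reads `0,1,0,0,1,0,…`). -/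
def F1Lam (ℓ m : ℕ) : Set Ptn :=
  {mu | mu.Strict ∧ Contains mu (LamP ℓ) ∧ mu.size = (LamP ℓ).size + m ∧
    ∀ i j, (LamP ℓ).part i ≤ j → j < mu.part i → j % 3 = 1}

/-- `F_1^m(Δ_ℓ)`: partitions obtained from `Δ_ℓ` by adding `m` cells, each labelled `1`,
where the cell `(i,j)` is labelled `1` iff `i + j` is odd. -/
def F1Del (ℓ m : ℕ) : Set Ptn :=
  {mu | Contains mu (DelP ℓ) ∧ mu.size = (DelP ℓ).size + m ∧
    ∀ i j, (DelP ℓ).part i ≤ j → j < mu.part i → (i + j) % 2 = 1}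

/-- `(α, β)` is complementary relative to the rectangle `□(n,m)`:
`α ⊆ □(n,m)` and `β_i = m - α_{n+1-i}` for `1 ≤ i ≤ n` (0-indexed below). -/
def Complementary (n m : ℕ) (a b : Ptn) : Prop :=
  a.length ≤ n ∧ a.part 0 ≤ m ∧ b.length ≤ n ∧
    ∀ i < n, b.part i = m - a.part (n - 1 - i)

/-- `W(n,m)`: the set of `(n,m)`-balanced partitions, i.e. partitions of `2nm` with at
most `2n` parts satisfying `μ_i + μ_{2n+1-i} = 2m` for `1 ≤ i ≤ n` (0-indexed below). -/
def W (n m : ℕ) : Set Ptn :=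
  {mu | mu.size = 2 * n * m ∧ mu.length ≤ 2 * n ∧
    ∀ i < n, mu.part i + mu.part (2 * n - 1 - i) = 2 * m}

/-! ### The ring of symmetric functions

We realise the ring of symmetric functions (with rational coefficients) as the
polynomial ring `ℚ[p_1, p_2, …]` in the power sums: the variable `X n` of
`MvPolynomial ℕ ℚ` stands for the power sum `p_{n+1}`. -/

abbrev SymF := MvPolynomial ℕ ℚ

open MvPolynomial

/-- `z_ρ = ∏ a^{m_a} m_a!` for a partition given as a multiset `ρ`. -/
def zval (s : Multiset ℕ) : ℚ :=
  s.toFinset.prod (fun a => (a : ℚ) ^ s.count a * (Nat.factorial (s.count a) : ℚ))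

/-- The power sum product `p_ρ` of a multiset `ρ`. -/
noncomputable def pMult (s : Multiset ℕ) : SymF :=
  (s.map (fun a => (X (a - 1) : SymF))).prod

/-- The complete homogeneous symmetric function `h_n = Σ_{ρ ⊢ n} z_ρ⁻¹ p_ρ`. -/
noncomputable def hSym (n : ℕ) : SymF :=
  ∑ ρ : Nat.Partition n, (zval ρ.parts)⁻¹ • pMult ρ.parts

/-- `h_k` for an integer index, vanishing for negative `k`. -/
noncomputable def hz (k : ℤ) : SymF := if k < 0 then 0 else hSym k.toNat

/-- The Schur function `S_λ`, via the Jacobi–Trudi formula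
`S_λ = det(h_{λ_i - i + j})`. -/
noncomputable def schur (l : Ptn) : SymF :=
  Matrix.det (Matrix.of (fun i j : Fin l.length =>
    hz ((l.part i.val : ℤ) + (j.val : ℤ) - (i.val : ℤ))))

/-- The plethysm `p_r ∘ f`: the algebra endomorphism sending each power sum `p_k`
to `p_{rk}`, i.e. substituting `x_i^r` for each variable `x_i`. -/
noncomputable def pleth (r : ℕ) (f : SymF) : SymF :=
  MvPolynomial.aeval (fun n => (X (r * (n + 1) - 1) : SymF)) f

/-- The `z`-weight of a power-sum monomial (exponent vector `d`). -/
def zfac (d : ℕ →₀ ℕ) : ℚ :=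
  d.prod (fun i e => ((i : ℚ) + 1) ^ e * (Nat.factorial e : ℚ))

/-- The Hall inner product, for which `⟨p_ρ, p_σ⟩ = δ_{ρσ} z_ρ` and the Schur
functions are orthonormal. -/
noncomputable def hall (f g : SymF) : ℚ :=
  f.support.sum (fun d => f.coeff d * g.coeff d * zfac d)

/-- The multi-Littlewood–Richardson coefficient `LR^λ_{μ^0,…,μ^{r-1}}`:
the multiplicity of `S_λ` in `S_{μ^0} ⋯ S_{μ^{r-1}}`. -/
noncomputable def LRmulti (lam : Ptn) (r : ℕ) (q : ℕ → Ptn) : ℚ :=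
  hall ((Finset.range r).prod (fun k => schur (q k))) (schur lam)

/-- The Littlewood–Richardson coefficient `LR^λ_{α,β}`:
the multiplicity of `S_λ` in `S_α · S_β`. -/
noncomputable def LR2 (lam a b : Ptn) : ℚ := hall (schur a * schur b) (schur lam)

/-- The irreducible symmetric group character `χ^μ(ρ)`, via the Frobenius formula
`χ^μ_ρ = ⟨S_μ, p_ρ⟩`. -/
noncomputable def chi (mu rho : Ptn) : ℚ := hall (schur mu) (pMult rho.parts)

/-- Symmetric functions in two alphabets `u`, `v`: `X (inl n)` is `p_{n+1}(u)` and
`X (inr n)` is `p_{n+1}(v)`. -/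
abbrev SymF2 := MvPolynomial (ℕ ⊕ ℕ) ℚ

/-- `f ↦ f(u)`. -/
noncomputable def toU : SymF →ₐ[ℚ] SymF2 :=
  aeval (fun n => (X (Sum.inl n) : SymF2))

/-- `f ↦ f(v)`. -/
noncomputable def toV : SymF →ₐ[ℚ] SymF2 :=
  aeval (fun n => (X (Sum.inr n) : SymF2))

/-- `f ↦ f(u - v)`, the difference of alphabets: `p_k ↦ p_k(u) - p_k(v)`. -/
noncomputable def toUV : SymF →ₐ[ℚ] SymF2 :=
  aeval (fun n => (X (Sum.inl n) : SymF2) - X (Sum.inr n))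

/-!
On the `3`-abacus everything is read off from Frobenius coordinates. With `N` beads
(`N ≥ λ₁ + ℓ(λ)`) the beta-set of `D(λ) = (λ | λ - 1)` has a bead at `N + s` and a hole at
`N - s` for every part `s` of `λ`, and all other positions below `N` are beads. Taking
`N = 3a` with `a = λ₁`, arms `≡ k` and legs `≡ 2 - k (mod 3)` land on runner `k`, which is
therefore of the same form with `a` in place of `N`: runner `0` is `D` of the parts of `λ`
divisible by `3` (divided by `3`), while runners `1` and `2` carry `(P₁ | P₂)` and
`(P₂ | P₁)`, where `Pₖ` are the parts `≡ k (mod 3)` (divided by `3`). Swapping arms and legs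
is reflecting the abacus and exchanging beads with holes, i.e. conjugation. The core only
depends on the bead counts `a`, `a + |P₁| - |P₂|`, `a + |P₂| - |P₁|` of the three runners,
which are those of `D(λ^{bc(3)})` with `λ^{bc(3)} = (3e + k : e < d)`, where
`d = ||P₁| - |P₂||` and `k ∈ {1, 2}` is the residue with more parts.
-/

open Finset

namespace Ptn

theorem ext_parts {a b : Ptn} (h : a.parts = b.parts) : a = b := by
  cases a; cases b; simpa using h

theorem parts_of (s : Multiset ℕ) : (of s).parts = s.filter (0 < ·) := rfl

def sortedParts (l : Ptn) : List ℕ := (l.parts.sort (· ≤ ·)).reverse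

theorem part_eq_getD (l : Ptn) (i : ℕ) : l.part i = l.sortedParts.getD i 0 := rfl

theorem sortedParts_pairwise (l : Ptn) : l.sortedParts.Pairwise (· ≥ ·) := by
  rw [sortedParts, List.pairwise_reverse]
  exact Multiset.pairwise_sort l.parts (· ≤ ·)

theorem coe_sortedParts (l : Ptn) : (l.sortedParts : Multiset ℕ) = l.parts := by
  rw [sortedParts, Multiset.coe_reverse, Multiset.sort_eq]

theorem length_sortedParts (l : Ptn) : l.sortedParts.length = l.length := by
  simpa [Ptn.length] using congrArg Multiset.card l.coe_sortedParts

theorem _root_.List.le_getD_iff_lt_length_filter {v : ℕ} (hv : 0 < v) :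
    ∀ {L : List ℕ}, L.Pairwise (· ≥ ·) → ∀ i,
      v ≤ L.getD i 0 ↔ i < (L.filter (v ≤ ·)).length
  | [], _, i => by simp; omega
  | a :: t, hs, i => by
    obtain ⟨ha, ht⟩ := List.pairwise_cons.mp hs
    have ih := List.le_getD_iff_lt_length_filter hv ht
    by_cases hva : v ≤ a
    · cases i with
      | zero => simp [hva]
      | succ i => simp only [List.getD_cons_succ, ih i]; simp [hva]
    · have hnil : t.filter (v ≤ ·) = [] :=
        List.filter_eq_nil_iff.mpr fun x hx => by have := ha x hx; simp; omega
      cases i with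
      | zero => simp [hva, hnil]
      | succ i => simp only [List.getD_cons_succ, ih i]; simp [hva, hnil]

theorem le_part_iff (l : Ptn) (i : ℕ) {v : ℕ} (hv : 0 < v) :
    v ≤ l.part i ↔ i < Multiset.card (l.parts.filter (v ≤ ·)) := by
  rw [part_eq_getD, List.le_getD_iff_lt_length_filter hv l.sortedParts_pairwise,
    ← l.coe_sortedParts, Multiset.filter_coe, Multiset.coe_card]

theorem part_antitone (l : Ptn) : Antitone l.part := by
  intro i j hij
  rcases Nat.eq_zero_or_pos (l.part j) with h | h
  · omega
  · have := (l.le_part_iff j h).mp le_rfl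
    exact (l.le_part_iff i h).mpr (by omega)

theorem part_eq_zero_of_length_le (l : Ptn) {i : ℕ} (hi : l.length ≤ i) : l.part i = 0 := by
  rw [part_eq_getD, List.getD_eq_default]
  rwa [length_sortedParts]

theorem part_mem (l : Ptn) {i : ℕ} (hi : i < l.length) : l.part i ∈ l.parts := by
  rw [← l.length_sortedParts] at hi
  rw [part_eq_getD, List.getD_eq_getElem _ _ hi, ← l.coe_sortedParts]
  exact Multiset.mem_coe.mpr (List.getElem_mem hi)

theorem part_pos (l : Ptn) {i : ℕ} (hi : i < l.length) : 0 < l.part i :=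
  l.pos _ (l.part_mem hi)

theorem exists_part_eq (l : Ptn) {x : ℕ} (hx : x ∈ l.parts) : ∃ i < l.length, l.part i = x := by
  rw [← l.coe_sortedParts, Multiset.mem_coe] at hx
  obtain ⟨i, hi, rfl⟩ := List.getElem_of_mem hx
  exact ⟨i, l.length_sortedParts ▸ hi, by rw [part_eq_getD, List.getD_eq_getElem _ _ hi]⟩

theorem part_zero_le_iff (l : Ptn) {m : ℕ} : l.part 0 ≤ m ↔ ∀ x ∈ l.parts, x ≤ m := by
  constructor
  · intro h x hx
    obtain ⟨i, -, rfl⟩ := l.exists_part_eq hx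
    exact (l.part_antitone (Nat.zero_le i)).trans h
  · intro h
    rcases Nat.eq_zero_or_pos l.length with h0 | h0
    · rw [l.part_eq_zero_of_length_le h0.le]; exact Nat.zero_le m
    · exact h _ (l.part_mem h0)

theorem map_part_range (l : Ptn) : (Multiset.range l.length).map l.part = l.parts := by
  rw [← l.coe_sortedParts, ← l.length_sortedParts, Multiset.range, Multiset.map_coe]
  congr 1
  refine List.ext_getElem (by simp) fun i h1 h2 => ?_
  simp [part_eq_getD, List.getElem?_eq_getElem h2]

theorem Strict.part_lt_part {l : Ptn} (h : l.Strict) {i j : ℕ} (hij : i < j)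
    (hj : j < l.length) : l.part j < l.part i := by
  have hnd : l.sortedParts.Nodup := by
    have : l.parts.Nodup := h
    rwa [← l.coe_sortedParts, Multiset.coe_nodup] at this
  have hi' : i < l.sortedParts.length := by rw [length_sortedParts]; omega
  have hj' : j < l.sortedParts.length := by rwa [length_sortedParts]
  rw [part_eq_getD, part_eq_getD, List.getD_eq_getElem _ _ hi', List.getD_eq_getElem _ _ hj']
  refine lt_of_le_of_ne (List.pairwise_iff_getElem.mp l.sortedParts_pairwise i j hi' hj' hij)
    fun he => ?_
  have := (hnd.getElem_inj_iff).mp he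
  omega

theorem Strict.part_add_le {l : Ptn} (h : l.Strict) {i j : ℕ} (hij : i ≤ j)
    (hj : j < l.length) : l.part j + (j - i) ≤ l.part i := by
  induction j, hij using Nat.le_induction with
  | base => omega
  | succ n hn ih =>
    have := h.part_lt_part (Nat.lt_add_one n) hj
    have := ih (by omega)
    omega

theorem Strict.length_le_part_zero {l : Ptn} (h : l.Strict) : l.length ≤ l.part 0 := by
  rcases Nat.eq_zero_or_pos l.length with h0 | h0
  · omega
  · have := h.part_add_le (Nat.zero_le _) (Nat.sub_lt h0 one_pos)
    have := l.part_pos (Nat.sub_lt h0 one_pos)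
    omega

theorem card_filter_map_range (f : ℕ → ℕ) (n : ℕ) (p : ℕ → Prop) [DecidablePred p] :
    Multiset.card (((Multiset.range n).map f).filter p) = #{j ∈ range n | p (f j)} := by
  rw [← Multiset.countP_eq_card_filter, Multiset.countP_map]
  rfl

theorem length_of_map_range (f : ℕ → ℕ) (n : ℕ) :
    (of ((Multiset.range n).map f)).length = #{j ∈ range n | 0 < f j} :=
  card_filter_map_range f n _

theorem part_of_map_range {n : ℕ} {f : ℕ → ℕ} (hf : ∀ i j, i ≤ j → j < n → f j ≤ f i)
    {i : ℕ} (hi : i < n) : (of ((Multiset.range n).map f)).part i = f i := by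
  have hcount : ∀ v, 0 < v → Multiset.card ((of ((Multiset.range n).map f)).parts.filter (v ≤ ·))
      = #{j ∈ range n | v ≤ f j} := fun v hv => by
    rw [parts_of, Multiset.filter_filter, card_filter_map_range]
    congr 1
    exact filter_congr fun j _ => ⟨fun h => h.1, fun h => ⟨h, by omega⟩⟩
  refine le_antisymm ?_ ?_
  · by_contra! hlt
    have hv : 0 < f i + 1 := Nat.succ_pos _
    have h1 := ((of _).le_part_iff i hv).mp hlt
    rw [hcount _ hv] at h1
    have : {j ∈ range n | f i + 1 ≤ f j} ⊆ range i := fun j hj => by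
      simp only [mem_filter, mem_range] at hj ⊢
      by_contra! hji
      have := hf i j hji hj.1
      omega
    have := card_le_card this
    simp only [card_range] at this
    omega
  · rcases Nat.eq_zero_or_pos (f i) with h0 | h0
    · omega
    · rw [le_part_iff _ _ h0, hcount _ h0]
      have : range (i + 1) ⊆ {j ∈ range n | f i ≤ f j} := fun j hj => by
        simp only [mem_filter, mem_range] at hj ⊢
        exact ⟨by omega, hf j i (by omega) hi⟩
      simpa using card_le_card this

theorem conj_parts_of_part_zero_le (l : Ptn) {M : ℕ} (hM : l.part 0 ≤ M) :
    l.conj.parts = ((Multiset.range M).map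
      fun j => Multiset.card (l.parts.filter (j < ·))).filter (0 < ·) := by
  have hzero : ∀ j, l.part 0 ≤ j → Multiset.card (l.parts.filter (j < ·)) = 0 := fun j hj => by
    rw [Multiset.card_eq_zero, Multiset.filter_eq_nil]
    exact fun x hx => by have := l.part_zero_le_iff.mp le_rfl x hx; omega
  rw [conj, parts_of, ← Nat.add_sub_cancel' hM, Multiset.range_add, Multiset.map_add,
    Multiset.filter_add, Multiset.map_map]
  convert (add_zero _).symm using 2
  exact Multiset.filter_eq_nil.mpr fun x hx => by
    obtain ⟨j, -, rfl⟩ := Multiset.mem_map.mp hx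
    simp [hzero _ (Nat.le_add_right _ _)]

def ofFinset (S : Finset ℕ) (hS : 0 ∉ S) : Ptn :=
  ⟨S.val, fun _ hx => Nat.pos_of_ne_zero fun h => hS (h ▸ hx)⟩

theorem zero_notMem_toFinset_parts (l : Ptn) : 0 ∉ l.parts.toFinset := fun h =>
  (l.pos 0 (Multiset.mem_toFinset.mp h)).false

theorem ofFinset_strict (S : Finset ℕ) (hS : 0 ∉ S) : (ofFinset S hS).Strict := S.nodup

theorem mem_parts_ofFinset {S : Finset ℕ} (hS : 0 ∉ S) {x : ℕ} :
    x ∈ (ofFinset S hS).parts ↔ x ∈ S := Iff.rfl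

@[simp] theorem toFinset_parts_ofFinset (S : Finset ℕ) (hS : 0 ∉ S) :
    (ofFinset S hS).parts.toFinset = S := S.val_toFinset

@[simp] theorem length_ofFinset (S : Finset ℕ) (hS : 0 ∉ S) :
    (ofFinset S hS).length = #S := rfl

end Ptn

theorem mem_betaSet {l : Ptn} {m p : ℕ} :
    p ∈ betaSet l m ↔ ∃ i < m, l.part i + (m - 1 - i) = p := by
  simp [betaSet]

theorem betaSet_injOn (l : Ptn) (m : ℕ) :
    Set.InjOn (fun i => l.part i + (m - 1 - i)) (Set.Iio m) := by
  intro i hi j hj hij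
  simp only [Set.mem_Iio] at hi hj
  rcases lt_trichotomy i j with h | h | h
  · have := l.part_antitone h.le; simp only at hij; omega
  · exact h
  · have := l.part_antitone h.le; simp only at hij; omega

theorem card_betaSet (l : Ptn) (m : ℕ) : #(betaSet l m) = m := by
  rw [betaSet, card_image_of_injOn (by simpa using betaSet_injOn l m), card_range]

theorem le_of_mem_betaSet {l : Ptn} {m p : ℕ} (hp : p ∈ betaSet l m) : p ≤ l.part 0 + m := by
  obtain ⟨i, -, rfl⟩ := mem_betaSet.mp hp
  have := l.part_antitone (Nat.zero_le i)
  omega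

theorem sub_card_filter_lt_eq_count (B : Finset ℕ) (p : ℕ) :
    p - #{q ∈ B | q < p} = Nat.count (· ∉ B) p := by
  have hsplit := card_filter_add_card_filter_not (s := range p) (p := (· ∈ B))
  have hbelow : {q ∈ B | q < p} = {q ∈ range p | q ∈ B} := by ext; simp [and_comm]
  rw [Nat.count_eq_card_filter_range, hbelow]
  simp only [card_range] at hsplit
  omega

theorem parts_ptnOfBeads (B : Finset ℕ) :
    (ptnOfBeads B).parts = (B.val.map (Nat.count (· ∉ B))).filter (0 < ·) := by
  simp only [ptnOfBeads, Ptn.parts_of, sub_card_filter_lt_eq_count]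

theorem card_filter_parts_ptnOfBeads (B : Finset ℕ) {p : ℕ → Prop} [DecidablePred p]
    (hp : ¬ p 0) :
    Multiset.card ((ptnOfBeads B).parts.filter p) = #{b ∈ B | p (Nat.count (· ∉ B) b)} := by
  rw [parts_ptnOfBeads, Multiset.filter_filter,
    Multiset.filter_congr fun x _ => and_iff_left_of_imp fun hx => Nat.pos_of_ne_zero
      fun h0 => hp (h0 ▸ hx),
    Multiset.filter_map, Multiset.card_map]
  rfl

theorem ptnOfBeads_betaSet (l : Ptn) {m : ℕ} (hm : l.length ≤ m) :
    ptnOfBeads (betaSet l m) = l := by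
  apply Ptn.ext_parts
  have hbelow : ∀ i < m, #{q ∈ betaSet l m | q < l.part i + (m - 1 - i)} = m - 1 - i := by
    intro i hi
    have : {q ∈ betaSet l m | q < l.part i + (m - 1 - i)}
        = (Ioo i m).image fun j => l.part j + (m - 1 - j) := by
      ext q
      simp only [mem_filter, mem_betaSet, mem_image, mem_Ioo]
      constructor
      · rintro ⟨⟨j, hj, rfl⟩, hlt⟩
        refine ⟨j, ⟨?_, hj⟩, rfl⟩
        by_contra! hji
        have := l.part_antitone hji
        omega
      · rintro ⟨j, ⟨hij, hj⟩, rfl⟩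
        have := l.part_antitone hij.le
        exact ⟨⟨j, hj, rfl⟩, by omega⟩
    rw [this, card_image_of_injOn ((betaSet_injOn l m).mono fun j hj => (mem_Ioo.mp hj).2),
      Nat.card_Ioo]
    omega
  have hval : (betaSet l m).val = (Multiset.range m).map fun i => l.part i + (m - 1 - i) := by
    rw [betaSet, image_val_of_injOn (by simpa using betaSet_injOn l m), range_val]
  rw [ptnOfBeads, Ptn.parts_of, hval, Multiset.map_map,
    Multiset.map_congr rfl fun i hi => show _ = l.part i by
      simp only [Function.comp_apply, hbelow i (Multiset.mem_range.mp hi)]; omega,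
    ← Nat.add_sub_cancel' hm, Multiset.range_add, Multiset.map_add, Multiset.filter_add,
    l.map_part_range, Multiset.filter_eq_self.mpr fun x hx => l.pos x hx,
    Multiset.filter_eq_nil.mpr fun x hx => ?_, add_zero]
  obtain ⟨_, hj, rfl⟩ := Multiset.mem_map.mp hx
  obtain ⟨j, -, rfl⟩ := Multiset.mem_map.mp hj
  simp [l.part_eq_zero_of_length_le (Nat.le_add_right _ j)]

theorem mem_image_pred_iff {S : Finset ℕ} (hS : 0 ∉ S) {x : ℕ} :
    x ∈ S.image (· - 1) ↔ x + 1 ∈ S := by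
  simp only [mem_image]
  constructor
  · rintro ⟨s, hs, rfl⟩
    obtain ⟨t, rfl⟩ := Nat.exists_eq_succ_of_ne_zero (ne_of_mem_of_not_mem hs hS)
    simpa using hs
  · exact fun h => ⟨x + 1, h, rfl⟩

theorem card_image_pred {S : Finset ℕ} (hS : 0 ∉ S) : #(S.image (· - 1)) = #S :=
  card_image_of_injOn fun x hx y hy hxy => by
    have := ne_of_mem_of_not_mem hx hS; have := ne_of_mem_of_not_mem hy hS
    omega

/-- The beta-set with `N` beads of the partition with Frobenius coordinates `(P | Q)`:
beads at `N + p` for the arms `p ∈ P`, holes at `N - 1 - q` for the legs `q ∈ Q`. -/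
def frobBeads (N : ℕ) (P Q : Finset ℕ) : Finset ℕ :=
  P.image (N + ·) ∪ {x ∈ range N | N - 1 - x ∉ Q}

theorem mem_frobBeads {N : ℕ} {P Q : Finset ℕ} {x : ℕ} :
    x ∈ frobBeads N P Q ↔ (N ≤ x ∧ x - N ∈ P) ∨ (x < N ∧ N - 1 - x ∉ Q) := by
  simp only [frobBeads, mem_union, mem_image, mem_filter, mem_range]
  constructor
  · rintro (⟨p, hp, rfl⟩ | h)
    · exact Or.inl ⟨by omega, by simpa using hp⟩
    · exact Or.inr h
  · rintro (⟨hx, hp⟩ | h)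
    · exact Or.inl ⟨x - N, hp, by omega⟩
    · exact Or.inr h

theorem card_frobBeads {N : ℕ} {P Q : Finset ℕ} (hQ : Q ⊆ range N) :
    #(frobBeads N P Q) = #P + (N - #Q) := by
  have hdisj : Disjoint (P.image (N + ·)) {x ∈ range N | N - 1 - x ∉ Q} := by
    simp only [disjoint_left, mem_image, mem_filter, mem_range]
    rintro _ ⟨p, -, rfl⟩ h
    omega
  have hholes : #{x ∈ range N | N - 1 - x ∈ Q} = #Q := by
    refine card_nbij' (N - 1 - ·) (N - 1 - ·) ?_ ?_ ?_ ?_ <;>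
      intro x hx <;> simp only [coe_filter, mem_range, Set.mem_ofPred_eq, mem_coe] at hx ⊢
    · exact hx.2
    · have := mem_range.mp (hQ hx); exact ⟨by omega, by rwa [show N - 1 - (N - 1 - x) = x by omega]⟩
    · omega
    · have := mem_range.mp (hQ hx); omega
  have hsplit := card_filter_add_card_filter_not (s := range N) (p := fun x => N - 1 - x ∈ Q)
  rw [frobBeads, card_union_of_disjoint hdisj, card_image_of_injective _ (add_right_injective N)]
  rw [card_range, hholes] at hsplit
  omega

theorem frobBeads_subset_range {N M : ℕ} {P Q : Finset ℕ} (hP : P ⊆ range M) :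
    frobBeads N P Q ⊆ range (N + M) := fun x hx => by
  rcases mem_frobBeads.mp hx with ⟨hx, hp⟩ | ⟨hx, -⟩
  · have := mem_range.mp (hP hp); exact mem_range.mpr (by omega)
  · exact mem_range.mpr (by omega)

theorem frobBeads_range_empty (N d : ℕ) : frobBeads N (range d) ∅ = range (N + d) := by
  ext x; simp [mem_frobBeads]; omega

@[simp] theorem frobBeads_empty_empty (N : ℕ) : frobBeads N ∅ ∅ = range N := by
  simpa using frobBeads_range_empty N 0

theorem frobBeads_empty_range {N d : ℕ} (hd : d ≤ N) : frobBeads N ∅ (range d) = range (N - d) := by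
  ext x; simp [mem_frobBeads]; omega

def doubleRow (μ : Ptn) (i : ℕ) : ℕ :=
  (if i < μ.length then μ.part i + 1 else 0) +
    #{j ∈ range (min i μ.length) | i + 1 ≤ j + μ.part j}

theorem double_eq (μ : Ptn) :
    double μ = Ptn.of ((Multiset.range (μ.length + μ.part 0)).map (doubleRow μ)) := rfl

section Double

variable {μ : Ptn} {i : ℕ}

theorem doubleRow_of_lt (hs : μ.Strict) (hi : i < μ.length) : doubleRow μ i = μ.part i + 1 + i := by
  have : {j ∈ range i | i + 1 ≤ j + μ.part j} = range i := filter_true_of_mem fun j hj => by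
    have := hs.part_add_le (mem_range.mp hj).le hi
    have := μ.part_pos hi
    omega
  rw [doubleRow, if_pos hi, min_eq_left hi.le, this, card_range]

theorem doubleRow_of_le (hi : μ.length ≤ i) :
    doubleRow μ i = #{j ∈ range μ.length | i + 1 ≤ j + μ.part j} := by
  rw [doubleRow, if_neg (by omega), min_eq_right hi, zero_add]

theorem doubleRow_le_length (hi : μ.length ≤ i) : doubleRow μ i ≤ μ.length := by
  rw [doubleRow_of_le hi]
  exact (card_filter_le _ _).trans (card_range _).le

theorem doubleRow_antitone (hs : μ.Strict) : Antitone (doubleRow μ) := by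
  refine antitone_nat_of_succ_le fun i => ?_
  rcases lt_or_ge (i + 1) μ.length with h | h
  · rw [doubleRow_of_lt hs h, doubleRow_of_lt hs (by omega)]
    have := hs.part_lt_part (Nat.lt_add_one i) h
    omega
  · rcases lt_or_ge i μ.length with h' | h'
    · have := doubleRow_le_length h
      rw [doubleRow_of_lt hs h']
      omega
    · rw [doubleRow_of_le h, doubleRow_of_le h']
      exact card_le_card (monotone_filter_right _ fun j _ hj => by omega)

theorem part_double (hs : μ.Strict) (hi : i < μ.length + μ.part 0) :
    (double μ).part i = doubleRow μ i :=
  Ptn.part_of_map_range (fun _ _ hab _ => doubleRow_antitone hs hab) hi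

theorem part_double_eq_zero (hi : μ.length + μ.part 0 ≤ i) : (double μ).part i = 0 := by
  refine (double μ).part_eq_zero_of_length_le ?_
  rw [double_eq, Ptn.length_of_map_range]
  exact (card_filter_le _ _).trans ((card_range _).trans_le hi)

theorem length_double (hs : μ.Strict) : (double μ).length = μ.part 0 := by
  have hL := hs.length_le_part_zero
  rw [double_eq, Ptn.length_of_map_range]
  convert card_range (μ.part 0)
  ext j
  simp only [mem_filter, mem_range]
  constructor
  · rintro ⟨hj, hpos⟩
    rcases lt_or_ge j μ.length with h | h
    · omega
    · rw [doubleRow_of_le h] at hpos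
      obtain ⟨k, hk⟩ := card_pos.mp hpos
      simp only [mem_filter, mem_range] at hk
      have := hs.part_add_le (Nat.zero_le k) hk.1
      omega
  · intro hj
    have hL0 : 0 < μ.length := by
      by_contra! h0
      have := μ.part_eq_zero_of_length_le (i := 0) (by omega)
      omega
    refine ⟨by omega, ?_⟩
    rcases lt_or_ge j μ.length with h | h
    · rw [doubleRow_of_lt hs h]; omega
    · rw [doubleRow_of_le h]
      exact card_pos.mpr ⟨0, by simp only [mem_filter, mem_range]; omega⟩

/-- The rows `j` counted by `doubleRow μ i` form an initial segment, which contains `b`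
iff `i < b + μ_b`. -/
theorem doubleRow_add_part_ne (hs : μ.Strict) (hi : μ.length ≤ i) {b : ℕ} (hb : b < μ.length) :
    doubleRow μ i + μ.part b ≠ i + 1 := by
  rw [doubleRow_of_le hi]
  by_cases hbi : i + 1 ≤ b + μ.part b
  · have : range (b + 1) ⊆ {j ∈ range μ.length | i + 1 ≤ j + μ.part j} := fun j hj => by
      have hjb := Nat.lt_succ_iff.mp (mem_range.mp hj)
      have := hs.part_add_le hjb hb
      simp only [mem_filter, mem_range]
      omega
    have := card_le_card this
    rw [card_range] at this
    omega
  · have : {j ∈ range μ.length | i + 1 ≤ j + μ.part j} ⊆ range b := fun j hj => by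
      simp only [mem_filter, mem_range] at hj ⊢
      by_contra! hjb
      have := hs.part_add_le hjb hj.1
      omega
    have := card_le_card this
    rw [card_range] at this
    omega

theorem betaSet_double (hs : μ.Strict) {N : ℕ} (hN : μ.part 0 + μ.length ≤ N) :
    betaSet (double μ) N
      = frobBeads N μ.parts.toFinset (μ.parts.toFinset.image (· - 1)) := by
  have h0 := μ.zero_notMem_toFinset_parts
  have hle : ∀ x ∈ μ.parts.toFinset, x ≤ μ.part 0 := fun x hx =>
    μ.part_zero_le_iff.mp le_rfl x (Multiset.mem_toFinset.mp hx)
  have hlegs : μ.parts.toFinset.image (· - 1) ⊆ range N := fun y hy => by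
    have := hle _ ((mem_image_pred_iff h0).mp hy)
    exact mem_range.mpr (by omega)
  refine eq_of_subset_of_card_le (fun p hp => ?_) ?_
  · obtain ⟨i, hiN, rfl⟩ := mem_betaSet.mp hp
    simp only [mem_frobBeads, mem_image_pred_iff h0, Multiset.mem_toFinset]
    rcases lt_or_ge i μ.length with hi | hi
    · rw [part_double hs (by omega), doubleRow_of_lt hs hi]
      have hsub : μ.part i + 1 + i + (N - 1 - i) - N = μ.part i := by omega
      exact Or.inl ⟨by omega, by simpa [hsub] using μ.part_mem hi⟩
    rcases lt_or_ge i (μ.length + μ.part 0) with hi' | hi'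
    · rw [part_double hs hi']
      have := doubleRow_le_length hi
      refine Or.inr ⟨by omega, fun hmem => ?_⟩
      obtain ⟨b, hb, hbx⟩ := μ.exists_part_eq hmem
      have := μ.part_pos hb
      exact doubleRow_add_part_ne hs hi hb (by omega)
    · rw [part_double_eq_zero hi']
      refine Or.inr ⟨by omega, fun hmem => ?_⟩
      have := hle _ (Multiset.mem_toFinset.mpr hmem)
      omega
  · rw [card_betaSet, card_frobBeads hlegs, card_image_pred h0, Multiset.toFinset_card_of_nodup hs]
    exact (Nat.add_sub_cancel' (by unfold Ptn.length at hN; omega)).le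

theorem double_eq_ptnOfBeads_frobBeads (hs : μ.Strict) {N : ℕ} (hN : μ.part 0 + μ.length ≤ N) :
    double μ = ptnOfBeads (frobBeads N μ.parts.toFinset (μ.parts.toFinset.image (· - 1))) := by
  rw [← betaSet_double hs hN, ptnOfBeads_betaSet _ (by rw [length_double hs]; omega)]

end Double

def runner (r : ℕ) (B : Finset ℕ) (k : ℕ) : Finset ℕ := {p ∈ B | p % r = k}.image (· / r)

section Runner

variable {r k : ℕ}

theorem mem_runner (hk : k < r) {B : Finset ℕ} {s : ℕ} : s ∈ runner r B k ↔ r * s + k ∈ B := by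
  have hr : 0 < r := by omega
  simp only [runner, mem_image, mem_filter]
  constructor
  · rintro ⟨p, ⟨hp, rfl⟩, rfl⟩
    rwa [Nat.div_add_mod]
  · exact fun h => ⟨_, ⟨h, by simp [Nat.mod_eq_of_lt hk]⟩,
      by simp [Nat.mul_add_div hr, Nat.div_eq_of_lt hk]⟩

theorem eq_of_runner_eq (hr : 0 < r) {B B' : Finset ℕ}
    (h : ∀ k < r, runner r B k = runner r B' k) : B = B' := by
  ext p
  have := congrArg (p / r ∈ ·) (h (p % r) (Nat.mod_lt p hr))
  simpa only [mem_runner (Nat.mod_lt p hr), Nat.div_add_mod, eq_iff_iff] using this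

theorem mul_add_eq_mul_add_iff {j : ℕ} (hj : j < r) (hk : k < r) {e s : ℕ} :
    r * e + j = r * s + k ↔ e = s ∧ j = k := by
  constructor
  · intro h
    have hr : 0 < r := by omega
    have hdiv := congrArg (· / r) h
    have hmod := congrArg (· % r) h
    simp only [Nat.mul_add_div hr, Nat.div_eq_of_lt hj, Nat.div_eq_of_lt hk, Nat.mul_add_mod,
      Nat.mod_eq_of_lt hj, Nat.mod_eq_of_lt hk] at hdiv hmod
    omega
  · rintro ⟨rfl, rfl⟩; rfl

theorem runnerLevels_eq_runner (hk : k < r) (l : Ptn) :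
    runnerLevels r l k = runner r (betaSet l (r * l.length)) k := by
  ext s
  rw [runnerLevels, mem_filter, mem_runner hk, mem_range, and_iff_right_iff_imp]
  intro hs
  have := le_of_mem_betaSet hs
  have := Nat.le_mul_of_pos_left s (show 0 < r by omega)
  omega

theorem runner_frobBeads (hk : k < r) (a : ℕ) (P Q : Finset ℕ) :
    runner r (frobBeads (r * a) P Q) k = frobBeads a (runner r P k) (runner r Q (r - 1 - k)) := by
  ext s
  rw [mem_runner hk, mem_frobBeads, mem_frobBeads, mem_runner hk, mem_runner (by omega)]
  rcases le_or_gt a s with has | hsa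
  · obtain ⟨t, rfl⟩ := Nat.exists_eq_add_of_le has
    have hsub : r * (a + t) + k - r * a = r * t + k := by rw [Nat.mul_add]; omega
    rw [hsub, Nat.add_sub_cancel_left]
    have : r * a ≤ r * (a + t) + k := by rw [Nat.mul_add]; omega
    constructor
    · rintro (h | ⟨h, -⟩)
      · exact Or.inl ⟨has, h.2⟩
      · omega
    · rintro (h | ⟨h, -⟩)
      · exact Or.inl ⟨this, h.2⟩
      · omega
  · obtain ⟨t, rfl⟩ := Nat.exists_eq_add_of_lt hsa
    have hsub : r * (s + t + 1) - 1 - (r * s + k) = r * t + (r - 1 - k) := by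
      simp only [Nat.mul_add, mul_one]; omega
    have hlt : r * s + k < r * (s + t + 1) := by simp only [Nat.mul_add, mul_one]; omega
    rw [hsub, show s + t + 1 - 1 - s = t by omega]
    constructor
    · rintro (⟨h, -⟩ | ⟨-, h⟩)
      · omega
      · exact Or.inr ⟨hsa, h⟩
    · rintro (⟨h, -⟩ | ⟨-, h⟩)
      · omega
      · exact Or.inr ⟨hlt, h⟩

theorem runner_image_pred_of_lt (hk : k + 1 < r) {S : Finset ℕ} (hS : 0 ∉ S) :
    runner r (S.image (· - 1)) k = runner r S (k + 1) := by
  ext s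
  rw [mem_runner (by omega), mem_image_pred_iff hS, mem_runner hk, add_assoc]

theorem zero_notMem_runner_zero (hr : 0 < r) {S : Finset ℕ} (hS : 0 ∉ S) : 0 ∉ runner r S 0 := by
  rwa [mem_runner hr, mul_zero]

theorem runner_image_pred_last (hr : 0 < r) {S : Finset ℕ} (hS : 0 ∉ S) :
    runner r (S.image (· - 1)) (r - 1) = (runner r S 0).image (· - 1) := by
  ext s
  rw [mem_runner (by omega), mem_image_pred_iff hS,
    mem_image_pred_iff (zero_notMem_runner_zero hr hS), mem_runner hr,
    show r * s + (r - 1) + 1 = r * (s + 1) + 0 by rw [Nat.mul_add]; omega]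

theorem runner_coreBeads (hk : k < r) (n : ℕ → ℕ) :
    runner r ((range r).biUnion fun j => (range (n j)).image (r * · + j)) k = range (n k) := by
  ext s
  simp only [mem_runner hk, mem_biUnion, mem_range, mem_image]
  constructor
  · rintro ⟨j, hj, e, he, hes⟩
    obtain ⟨rfl, rfl⟩ := (mul_add_eq_mul_add_iff hj hk).mp hes
    exact he
  · exact fun hs => ⟨k, hk, s, hs, rfl⟩

theorem runner_image_mul_add {j : ℕ} (hj : j < r) (hk : k < r) (d : ℕ) :
    runner r ((range d).image (r * · + j)) k = if k = j then range d else ∅ := by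
  ext s
  simp only [mem_runner hk, mem_image, mem_range, mul_add_eq_mul_add_iff hj hk]
  split_ifs with h <;> simp [h, eq_comm]

theorem card_runner_le (hk : k < r) {S : Finset ℕ} {a : ℕ} (hS : ∀ x ∈ S, x ≤ a) :
    r * #(runner r S k) + k ≤ a + r := by
  have hsub : runner r S k ⊆ range ((a + r - k) / r) := fun s hs => by
    have := hS _ ((mem_runner hk).mp hs)
    refine mem_range.mpr ((Nat.le_div_iff_mul_le (by omega)).mpr ?_)
    rw [Nat.succ_mul, mul_comm]
    omega
  have := Nat.mul_le_mul_left r ((card_le_card hsub).trans (card_range _).le)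
  have := Nat.mul_div_le (a + r - k) r
  omega

end Runner

section Conjugate

variable {B : Finset ℕ} {M : ℕ}

theorem count_notMem_reflect (hB : B ⊆ range M) {h : ℕ} (hh : h < M) :
    Nat.count (· ∉ {y ∈ range M | M - 1 - y ∉ B}) (M - 1 - h) = #{b ∈ B | h < b} := by
  have hB' : ∀ b ∈ B, b < M := fun b hb => mem_range.mp (hB hb)
  rw [Nat.count_eq_card_filter_range]
  refine card_nbij' (M - 1 - ·) (M - 1 - ·) ?_ ?_ ?_ ?_ <;> intro x hx <;>
    simp only [coe_filter, mem_filter, mem_range, Set.mem_ofPred_eq, not_and, not_not] at hx ⊢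
  · exact ⟨hx.2 (by omega), by omega⟩
  · have := hB' x hx.1
    exact ⟨by omega, fun _ => by rw [show M - 1 - (M - 1 - x) = x by omega]; exact hx.1⟩
  · omega
  · have := hB' x hx.1; omega

theorem card_filter_lt_eq_card_filter_count_lt {h : ℕ} (hh : h ∉ B) :
    #{b ∈ B | h < b} = #{b ∈ B | Nat.count (· ∉ B) h < Nat.count (· ∉ B) b} :=
  congrArg card (filter_congr fun _ _ => ⟨Nat.count_strict_mono hh, Nat.lt_of_count_lt_count⟩)

theorem map_count_notMem_reflect (hB : B ⊆ range M) :
    {y ∈ range M | M - 1 - y ∉ B}.val.map (Nat.count (· ∉ {y ∈ range M | M - 1 - y ∉ B}))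
      = {h ∈ range M | h ∉ B}.val.map fun h => #{b ∈ B | h < b} := by
  have hreflect : {y ∈ range M | M - 1 - y ∉ B} = {h ∈ range M | h ∉ B}.image (M - 1 - ·) := by
    ext y
    simp only [mem_filter, mem_image, mem_range]
    constructor
    · exact fun hy => ⟨M - 1 - y, ⟨by omega, hy.2⟩, by omega⟩
    · rintro ⟨h, hh, rfl⟩
      exact ⟨by omega, by rw [show M - 1 - (M - 1 - h) = h by omega]; exact hh.2⟩
  have hval : {y ∈ range M | M - 1 - y ∉ B}.val = {h ∈ range M | h ∉ B}.val.map (M - 1 - ·) := by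
    rw [hreflect, image_val_of_injOn fun x hx y hy hxy => by
      have := mem_range.mp (mem_filter.mp hx).1; have := mem_range.mp (mem_filter.mp hy).1; omega]
  rw [hval, Multiset.map_map]
  exact Multiset.map_congr rfl fun h hh =>
    count_notMem_reflect hB (mem_range.mp (mem_filter.mp hh).1)

theorem map_card_lt_holes (B : Finset ℕ) (M : ℕ) :
    ({h ∈ range M | h ∉ B}.val.map fun h => #{b ∈ B | h < b})
      = (Multiset.range (Nat.count (· ∉ B) M)).map
          fun j => #{b ∈ B | j < Nat.count (· ∉ B) b} := by
  set H := {h ∈ range M | h ∉ B}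
  have hH : ∀ h ∈ H, h < M ∧ h ∉ B := fun h hh => by simpa [H] using hh
  have hinj : Set.InjOn (Nat.count (· ∉ B)) H := fun x hx y hy hxy =>
    Nat.count_injective (hH x hx).2 (hH y hy).2 hxy
  have himage : H.image (Nat.count (· ∉ B)) = range (Nat.count (· ∉ B) M) := by
    refine eq_of_subset_of_card_le (fun j hj => ?_) ?_
    · obtain ⟨h, hh, rfl⟩ := mem_image.mp hj
      exact mem_range.mpr (Nat.count_strict_mono (hH h hh).2 (hH h hh).1)
    · rw [card_range, Nat.count_eq_card_filter_range, card_image_of_injOn hinj]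
  rw [← range_val, ← himage, image_val_of_injOn hinj, Multiset.map_map]
  exact Multiset.map_congr rfl fun h hh => card_filter_lt_eq_card_filter_count_lt (hH h hh).2

/-- The holes of `B`, numbered by `Nat.count`, index the columns of `ptnOfBeads B`: the `j`-th
column is as long as the number of beads above the `j`-th hole. -/
theorem ptnOfBeads_reflect (hB : B ⊆ range M) :
    ptnOfBeads {y ∈ range M | M - 1 - y ∉ B} = (ptnOfBeads B).conj := by
  have hpart0 : (ptnOfBeads B).part 0 ≤ Nat.count (· ∉ B) M := by
    refine (Ptn.part_zero_le_iff _).mpr fun x hx => ?_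
    rw [parts_ptnOfBeads] at hx
    obtain ⟨b, hb, rfl⟩ := Multiset.mem_map.mp (Multiset.mem_of_mem_filter hx)
    exact Nat.count_monotone _ (mem_range.mp (hB hb)).le
  apply Ptn.ext_parts
  rw [parts_ptnOfBeads, map_count_notMem_reflect hB, map_card_lt_holes,
    Ptn.conj_parts_of_part_zero_le _ hpart0]
  congr 2
  exact funext fun j => (card_filter_parts_ptnOfBeads B (Nat.not_lt_zero j)).symm

end Conjugate

theorem frobBeads_swap {N : ℕ} {P Q : Finset ℕ} (hQ : Q ⊆ range N) :
    frobBeads N Q P = {x ∈ range (N + N) | N + N - 1 - x ∉ frobBeads N P Q} := by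
  ext x
  simp only [mem_filter, mem_range, mem_frobBeads, not_or, not_and, not_not]
  rcases lt_or_ge x N with hx | hx
  · rw [show N + N - 1 - x - N = N - 1 - x by omega]
    constructor
    · rintro (⟨h, -⟩ | ⟨-, h⟩)
      · omega
      · exact ⟨by omega, fun _ => h, fun h' => by omega⟩
    · exact fun h => Or.inr ⟨hx, h.2.1 (by omega)⟩
  · constructor
    · rintro (⟨-, h⟩ | ⟨h, -⟩)
      · have := mem_range.mp (hQ h)
        rw [show N - 1 - (N + N - 1 - x) = x - N by omega]
        exact ⟨by omega, fun h' => by omega, fun _ => h⟩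
      · omega
    · intro h
      rw [show N - 1 - (N + N - 1 - x) = x - N by omega] at h
      exact Or.inl ⟨hx, h.2.2 (by omega)⟩

theorem ptnOfBeads_frobBeads_swap {N : ℕ} {P Q : Finset ℕ} (hP : P ⊆ range N)
    (hQ : Q ⊆ range N) :
    ptnOfBeads (frobBeads N Q P) = (ptnOfBeads (frobBeads N P Q)).conj := by
  rw [frobBeads_swap hQ, ptnOfBeads_reflect (frobBeads_subset_range hP)]

section DoubleQuotient

variable {r : ℕ} {μ : Ptn}

theorem runnerLevels_double (hr : 2 ≤ r) (hs : μ.Strict) {k : ℕ} (hk : k < r) :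
    runnerLevels r (double μ) k = frobBeads (μ.part 0) (runner r μ.parts.toFinset k)
      (runner r (μ.parts.toFinset.image (· - 1)) (r - 1 - k)) := by
  have hN : μ.part 0 + μ.length ≤ r * μ.part 0 := by
    have := Nat.mul_le_mul_right (μ.part 0) hr
    have := hs.length_le_part_zero
    omega
  rw [runnerLevels_eq_runner hk, length_double hs, betaSet_double hs hN, runner_frobBeads hk]

theorem runnerLevels_double_zero (hr : 2 ≤ r) (hs : μ.Strict) :
    runnerLevels r (double μ) 0 = frobBeads (μ.part 0) (runner r μ.parts.toFinset 0)
      ((runner r μ.parts.toFinset 0).image (· - 1)) := by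
  rw [runnerLevels_double hr hs (by omega), Nat.sub_zero,
    runner_image_pred_last (by omega) μ.zero_notMem_toFinset_parts]

theorem runnerLevels_double_of_pos (hr : 2 ≤ r) (hs : μ.Strict) {k : ℕ} (hk0 : 0 < k)
    (hk : k < r) :
    runnerLevels r (double μ) k
      = frobBeads (μ.part 0) (runner r μ.parts.toFinset k) (runner r μ.parts.toFinset (r - k)) := by
  rw [runnerLevels_double hr hs hk, runner_image_pred_of_lt (by omega) μ.zero_notMem_toFinset_parts,
    show r - 1 - k + 1 = r - k by omega]

theorem mul_add_le_part_zero_of_mem_runner {k s : ℕ} (hk : k < r)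
    (hs : s ∈ runner r μ.parts.toFinset k) : r * s + k ≤ μ.part 0 :=
  μ.part_zero_le_iff.mp le_rfl _ (Multiset.mem_toFinset.mp ((mem_runner hk).mp hs))

theorem runner_subset_range_part_zero {k : ℕ} (hk0 : 0 < k) (hk : k < r) :
    runner r μ.parts.toFinset k ⊆ range (μ.part 0) := fun s hs => by
  have := mul_add_le_part_zero_of_mem_runner hk hs
  have := Nat.le_mul_of_pos_left s (show 0 < r by omega)
  exact mem_range.mpr (by omega)

theorem card_runnerLevels_double_zero (hr : 2 ≤ r) (hs : μ.Strict) :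
    #(runnerLevels r (double μ) 0) = μ.part 0 := by
  have hP0 := zero_notMem_runner_zero (by omega) μ.zero_notMem_toFinset_parts (r := r)
  have hlegs : (runner r μ.parts.toFinset 0).image (· - 1) ⊆ range (μ.part 0) := fun x hx => by
    have := mul_add_le_part_zero_of_mem_runner (by omega) ((mem_image_pred_iff hP0).mp hx)
    have := Nat.le_mul_of_pos_left (x + 1) (show 0 < r by omega)
    exact mem_range.mpr (by omega)
  have := card_le_card hlegs
  rw [card_image_pred hP0, card_range] at this
  rw [runnerLevels_double_zero hr hs, card_frobBeads hlegs, card_image_pred hP0]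
  omega

theorem card_runnerLevels_double_of_pos (hr : 2 ≤ r) (hs : μ.Strict) {k : ℕ} (hk0 : 0 < k)
    (hk : k < r) :
    #(runnerLevels r (double μ) k)
      = #(runner r μ.parts.toFinset k) + (μ.part 0 - #(runner r μ.parts.toFinset (r - k))) := by
  rw [runnerLevels_double_of_pos hr hs hk0 hk,
    card_frobBeads (runner_subset_range_part_zero (by omega) (by omega))]

theorem quotP_double_sub (hr : 2 ≤ r) (hs : μ.Strict) {k : ℕ} (hk0 : 0 < k) (hk : k < r) :
    quotP r (double μ) (r - k) = (quotP r (double μ) k).conj := by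
  rw [quotP, quotP, runnerLevels_double_of_pos hr hs (by omega) (by omega),
    runnerLevels_double_of_pos hr hs hk0 hk, Nat.sub_sub_self hk.le,
    ptnOfBeads_frobBeads_swap (runner_subset_range_part_zero hk0 hk)
      (runner_subset_range_part_zero (by omega) (by omega))]

theorem quotP_double_zero (hr : 2 ≤ r) (hs : μ.Strict) :
    quotP r (double μ) 0 = double (Ptn.ofFinset (runner r μ.parts.toFinset 0)
      (zero_notMem_runner_zero (by omega) μ.zero_notMem_toFinset_parts)) := by
  set b := Ptn.ofFinset (runner r μ.parts.toFinset 0)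
      (zero_notMem_runner_zero (by omega) μ.zero_notMem_toFinset_parts)
  have hb : b.part 0 ≤ μ.part 0 / r := (Ptn.part_zero_le_iff _).mpr fun x hx =>
    (Nat.le_div_iff_mul_le (by omega)).mpr (by
      have := mul_add_le_part_zero_of_mem_runner (show 0 < r by omega)
        ((Ptn.mem_parts_ofFinset _).mp hx)
      rw [mul_comm]; omega)
  have hN : b.part 0 + b.length ≤ μ.part 0 := by
    have : b.length ≤ b.part 0 := (Ptn.ofFinset_strict _ _).length_le_part_zero
    have := Nat.mul_le_mul_right (μ.part 0 / r) hr
    have := Nat.mul_div_le (μ.part 0) r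
    omega
  rw [quotP, runnerLevels_double_zero hr hs,
    double_eq_ptnOfBeads_frobBeads (Ptn.ofFinset_strict _ _) hN,
    Ptn.toFinset_parts_ofFinset]

end DoubleQuotient

theorem coreBeads_three_eq_frobBeads {k : ℕ} (hk : k = 1 ∨ k = 2) {a d : ℕ} (hd : d ≤ a)
    {n : ℕ → ℕ} (hn0 : n 0 = a) (hnk : n k = a + d) (hnk' : n (3 - k) = a - d) :
    (range 3).biUnion (fun j => (range (n j)).image (3 * · + j))
      = frobBeads (3 * a) ((range d).image (3 * · + k))
          (((range d).image (3 * · + k)).image (· - 1)) := by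
  have hlegs : ((range d).image (3 * · + k)).image (· - 1) = (range d).image (3 * · + (k - 1)) := by
    rw [image_image]
    exact image_congr fun e _ => by simp only [Function.comp_apply]; omega
  refine eq_of_runner_eq (r := 3) (by norm_num) fun j hj => ?_
  rw [runner_coreBeads hj, runner_frobBeads hj, hlegs, runner_image_mul_add (by omega) hj,
    runner_image_mul_add (by omega) (by omega)]
  interval_cases j <;> rcases hk with rfl | rfl <;>
    simp [hn0, hnk, hnk', frobBeads_range_empty, frobBeads_empty_range hd]

theorem exists_strict_double_eq_coreP_three {μ : Ptn} (hs : μ.Strict) :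
    ∃ c : Ptn, c.Strict ∧ double c = coreP 3 (double μ) := by
  set a := μ.part 0
  set P := runner 3 μ.parts.toFinset
  have h1 : #(runnerLevels 3 (double μ) 1) = #(P 1) + (a - #(P 2)) :=
    card_runnerLevels_double_of_pos (by norm_num) hs one_pos (by norm_num)
  have h2 : #(runnerLevels 3 (double μ) 2) = #(P 2) + (a - #(P 1)) :=
    card_runnerLevels_double_of_pos (by norm_num) hs two_pos (by norm_num)
  have hbound : ∀ k < 3, 3 * #(P k) + k ≤ a + 3 := fun k hk =>
    card_runner_le hk fun x hx => μ.part_zero_le_iff.mp le_rfl x (Multiset.mem_toFinset.mp hx)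
  have := hbound 1 (by norm_num)
  have := hbound 2 (by norm_num)
  obtain ⟨k, d, hk, hnk, hnk', hd⟩ : ∃ k d, (k = 1 ∨ k = 2) ∧
      #(runnerLevels 3 (double μ) k) = a + d ∧ #(runnerLevels 3 (double μ) (3 - k)) = a - d ∧
      3 * d + k ≤ a + 3 := by
    rcases le_total #(P 2) #(P 1) with h | h
    · exact ⟨1, #(P 1) - #(P 2), Or.inl rfl, by omega, by rw [show 3 - 1 = 2 from rfl]; omega,
        by omega⟩
    · exact ⟨2, #(P 2) - #(P 1), Or.inr rfl, by omega, by rw [show 3 - 2 = 1 from rfl]; omega,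
        by omega⟩
  have hT0 : 0 ∉ (range d).image (3 * · + k) := by simp; omega
  have hN : (Ptn.ofFinset _ hT0).part 0 + (Ptn.ofFinset _ hT0).length ≤ 3 * a := by
    have : (Ptn.ofFinset _ hT0).part 0 ≤ 3 * d + k - 3 :=
      (Ptn.part_zero_le_iff _).mpr fun x hx => by
        obtain ⟨e, he, rfl⟩ := mem_image.mp ((Ptn.mem_parts_ofFinset _).mp hx)
        have := mem_range.mp he
        omega
    rw [Ptn.length_ofFinset, card_image_of_injective _ fun x y hxy => by omega, card_range]
    omega
  refine ⟨_, Ptn.ofFinset_strict _ hT0, ?_⟩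
  rw [double_eq_ptnOfBeads_frobBeads (Ptn.ofFinset_strict _ _) hN, Ptn.toFinset_parts_ofFinset,
    coreP, coreBeads_three_eq_frobBeads hk (by omega)
      (card_runnerLevels_double_zero (by norm_num) hs) hnk hnk']

/-- Proposition 3.5: for a strict partition `λ`, (1) there are strict partitions
`λ^{bc(3)}` and `λ^b[0]` with `D(λ^{bc(3)}) = D(λ)^{c(3)}` and `D(λ^b[0]) = D(λ)[0]`;
(2) `D(λ)[2]` is the conjugate of `D(λ)[1]`. -/
theorem stmt10 (lam : Ptn) (h : lam.Strict) :
    (∃ c : Ptn, c.Strict ∧ double c = coreP 3 (double lam)) ∧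
    (∃ b0 : Ptn, b0.Strict ∧ double b0 = quotP 3 (double lam) 0) ∧
    quotP 3 (double lam) 2 = (quotP 3 (double lam) 1).conj := by
  refine ⟨exists_strict_double_eq_coreP_three h,
    ⟨_, Ptn.ofFinset_strict _ _, (quotP_double_zero (by norm_num) h).symm⟩, ?_⟩
  simpa using quotP_double_sub (r := 3) (by norm_num) h one_pos (by norm_num)
end

section
/- Let ℓ be a positive odd integer and 0 ≤ m ≤ ℓ. For every partition μ ∈ F_1^m(Δ_ℓ), the pair (μ[0], (μ[1])') consisting of the first component of the 2-quotient of μ and the conjugate of the second component is complementary relative to the rectangle □(ℓ+1−m, m). -/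
open scoped BigOperators

open MvPolynomial

/-!
Since `ℓ` is odd, the only cells labelled `1` that can be added to `Δ_ℓ` are the outer corners
`(i, ℓ - i)`, one per row `i ≤ ℓ`; so `μ` is `Δ_ℓ` plus one cell in each row of a set
`S ⊆ {0, …, ℓ}` with `#S = m`. On the `2`-abacus of `μ` the row `i` becomes a bead at level
`ℓ - i` (above a common stack of bottom beads) on runner `1` if `i ∈ S` and on runner `0`
otherwise. Hence `μ[0]` has the parts `#{j ∈ S | i < j}` for `i ∉ S` and `μ[1]` the parts
`#{j ∉ S | i < j}` for `i ∈ S`: both are cut out of the `(ℓ + 1 - m) × m` rectangle by the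
same lattice path, one from each side, which after conjugating `μ[1]` is the complementarity.
-/

namespace Ptn

@[ext]
lemma ext {l l' : Ptn} (h : l.parts = l'.parts) : l = l' := by
  cases l; cases l'; cases h; rfl

def dlist (l : Ptn) : List ℕ := (l.parts.sort (· ≤ ·)).reverse

lemma part_eq_getD_dlist (l : Ptn) (i : ℕ) : l.part i = l.dlist.getD i 0 := rfl

lemma coe_dlist (l : Ptn) : (l.dlist : Multiset ℕ) = l.parts := by
  rw [dlist, Multiset.coe_reverse, Multiset.sort_eq]

lemma length_dlist (l : Ptn) : l.dlist.length = l.length := by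
  simpa [length] using congrArg Multiset.card l.coe_dlist

lemma pairwise_dlist (l : Ptn) : l.dlist.Pairwise (· ≥ ·) := by
  rw [dlist, List.pairwise_reverse]
  exact Multiset.pairwise_sort ..

lemma part_pos_iff (l : Ptn) (i : ℕ) : 0 < l.part i ↔ i < l.length := by
  rw [part_eq_getD_dlist, ← length_dlist]
  rcases Nat.lt_or_ge i l.dlist.length with hi | hi
  · rw [List.getD_eq_getElem _ _ hi]
    have hmem : l.dlist[i] ∈ l.parts := by
      rw [← coe_dlist]
      exact_mod_cast List.getElem_mem _
    simpa [hi] using l.pos _ hmem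
  · rw [List.getD_eq_default _ _ hi]
    simp only [lt_self_iff_false, false_iff, not_lt]
    exact hi

lemma le_part_zero_of_mem (l : Ptn) {x : ℕ} (hx : x ∈ l.parts) : x ≤ l.part 0 := by
  rw [← coe_dlist, Multiset.mem_coe] at hx
  have hp := l.pairwise_dlist
  rw [part_eq_getD_dlist]
  cases h : l.dlist with
  | nil => simp [h] at hx
  | cons a t =>
    rw [h, List.pairwise_cons] at hp
    rw [h, List.mem_cons] at hx
    rcases hx with rfl | hx
    · simp
    · simpa using hp.1 x hx

lemma _root_.List.sum_eq_sum_range_getD (w : List ℕ) :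
    w.sum = ∑ i ∈ Finset.range w.length, w.getD i 0 := by
  induction w with
  | nil => simp
  | cons a t ih =>
    rw [List.sum_cons, List.length_cons, Finset.sum_range_succ', ih]
    simp only [List.getD_cons_succ, List.getD_cons_zero]
    omega

lemma size_eq_sum_part (l : Ptn) {K : ℕ} (hK : l.length ≤ K) :
    l.size = ∑ i ∈ Finset.range K, l.part i := by
  have hsum : l.size = l.dlist.sum := by rw [size, ← coe_dlist, Multiset.sum_coe]
  rw [hsum, List.sum_eq_sum_range_getD, length_dlist]
  refine Finset.sum_subset (Finset.range_subset_range.mpr hK) fun i _ hi => ?_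
  have := (part_pos_iff l i).not
  simp only [Finset.mem_range] at hi
  rw [← part_eq_getD_dlist]
  omega

lemma _root_.List.getD_filter_pos_of_pairwise {L : List ℕ} (hL : L.Pairwise (· ≥ ·)) (i : ℕ) :
    (L.filter (0 < ·)).getD i 0 = L.getD i 0 := by
  induction L generalizing i with
  | nil => simp
  | cons a t ih =>
    rw [List.pairwise_cons] at hL
    by_cases ha : 0 < a
    · rw [List.filter_cons_of_pos (by simpa using ha)]
      cases i with
      | zero => simp
      | succ i => simpa using ih hL.2 i
    · have hzero : ∀ x ∈ a :: t, x = 0 := by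
        intro x hx
        rcases List.mem_cons.mp hx with rfl | hx
        · omega
        · have := hL.1 x hx; omega
      rw [List.filter_eq_nil_iff.mpr (by simpa using hzero), List.eq_replicate_iff.mpr ⟨rfl, hzero⟩]
      simp

lemma part_of_coe {L : List ℕ} (hL : L.Pairwise (· ≥ ·)) (i : ℕ) :
    (of (L : Multiset ℕ)).part i = L.getD i 0 := by
  have hdlist : (of (L : Multiset ℕ)).dlist = L.filter (0 < ·) := by
    have hsort : (of (L : Multiset ℕ)).parts.sort (· ≤ ·) = (L.filter (0 < ·)).reverse := by
      refine List.Perm.eq_of_pairwise' (Multiset.pairwise_sort ..) ?_ ?_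
      · rw [List.pairwise_reverse]
        exact hL.filter _
      · rw [← Multiset.coe_eq_coe, Multiset.sort_eq, Multiset.coe_reverse]
        simp [of]
    rw [dlist, hsort, List.reverse_reverse]
  rw [part_eq_getD_dlist, hdlist, List.getD_filter_pos_of_pairwise hL]

lemma conj_part (l : Ptn) (j : ℕ) :
    l.conj.part j = Multiset.card (l.parts.filter (j < ·)) := by
  have hanti : Antitone fun j => Multiset.card (l.parts.filter (j < ·)) := fun i j hij =>
    Multiset.card_le_card (Multiset.monotone_filter_right _ fun _ ha => lt_of_le_of_lt hij ha)
  rw [conj, Multiset.range, Multiset.map_coe,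
    part_of_coe (List.pairwise_lt_range.map _ fun a b hab => hanti hab.le)]
  rcases lt_or_ge j (l.part 0) with hj | hj
  · simp [hj]
  · rw [List.getD_eq_default _ _ (by simpa using hj), eq_comm, Multiset.card_eq_zero,
      Multiset.filter_eq_nil]
    exact fun a ha => not_lt.mpr ((le_part_zero_of_mem l ha).trans hj)

lemma length_conj_le (l : Ptn) : l.conj.length ≤ l.part 0 := by
  have := Multiset.card_le_card (Multiset.filter_le (fun x : ℕ => 0 < x)
    ((Multiset.range (l.part 0)).map fun j => Multiset.card (l.parts.filter (j < ·))))
  exact this.trans_eq (by rw [Multiset.card_map, Multiset.card_range])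

end Ptn

lemma delP_part (ℓ i : ℕ) : (DelP ℓ).part i = ℓ - i := by
  have hpair : (List.range (ℓ + 1)).reverse.Pairwise (· ≥ ·) :=
    List.pairwise_reverse.mpr (List.pairwise_lt_range.imp le_of_lt)
  rw [DelP, Multiset.range, ← Multiset.coe_reverse, Ptn.part_of_coe hpair]
  rcases le_or_gt i ℓ with hi | hi
  · rw [List.getD_reverse _ (by simpa using hi.trans_lt (Nat.lt_succ_self ℓ)),
      List.getD_eq_getElem _ _ (by simp)]
    simp
  · rw [List.getD_eq_default _ _ (by simpa using hi)]
    omega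

open Finset

section LatticePath

variable (A B : Finset ℕ)

lemma antitone_card_filter_lt : Antitone fun a => #(B.filter (a < ·)) := fun _ _ hab =>
  card_le_card (monotone_filter_right _ fun _ _ h => lt_of_le_of_lt hab h)

lemma card_filter_lt_lt_of_lt {w b : ℕ} (hw : w ∈ B) (hbw : b < w) :
    #(B.filter (w < ·)) < #(B.filter (b < ·)) := by
  refine card_lt_card ((ssubset_iff_of_subset ?_).mpr ⟨w, ?_, ?_⟩)
  · exact monotone_filter_right _ fun _ _ h => hbw.trans h
  · exact mem_filter.mpr ⟨hw, hbw⟩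
  · simp

lemma card_filter_lt_sort_getElem {t : ℕ} (ht : t < #A) :
    #(A.filter ((A.sort (· ≤ ·))[t]'(by simpa using ht) < ·)) = #A - 1 - t := by
  set e := A.orderEmbOfFin rfl
  have he : (A.sort (· ≤ ·))[t]'(by simpa using ht) = e ⟨t, ht⟩ :=
    (orderEmbOfFin_apply A rfl ⟨t, ht⟩).symm
  have hfilter : A.filter (e ⟨t, ht⟩ < ·) = (Ioi ⟨t, ht⟩).map e.toEmbedding := by
    ext x
    simp only [mem_filter, mem_map, mem_Ioi, RelEmbedding.coe_toEmbedding]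
    constructor
    · rintro ⟨hx, hlt⟩
      obtain ⟨u, rfl⟩ : x ∈ Set.range e := by rw [range_orderEmbOfFin]; exact hx
      exact ⟨u, e.lt_iff_lt.mp hlt, rfl⟩
    · rintro ⟨u, hu, rfl⟩
      exact ⟨orderEmbOfFin_mem A rfl u, e.lt_iff_lt.mpr hu⟩
  rw [he, hfilter, card_map, Fin.card_Ioi]

/-- The partition cut out of the rectangle `#A × #B` by the lattice path that reads the
elements of `A ∪ B` in increasing order, stepping up at those of `A` and right at those
of `B`: each `a ∈ A` contributes the part `#{b ∈ B | a < b}`. -/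
def pathPtn : Ptn := Ptn.of (A.val.map fun a => #(B.filter (a < ·)))

lemma pathPtn_part (t : ℕ) :
    (pathPtn A B).part t = ((A.sort (· ≤ ·)).map fun a => #(B.filter (a < ·))).getD t 0 := by
  rw [pathPtn, ← sort_eq (s := A) (r := (· ≤ ·)), Multiset.map_coe, Ptn.part_of_coe]
  exact (pairwise_sort A (· ≤ ·)).map _ fun _ _ h => antitone_card_filter_lt B h

lemma pathPtn_length_le : (pathPtn A B).length ≤ #A :=
  (Multiset.card_le_card (Multiset.filter_le _ _)).trans (by simp)

lemma pathPtn_part_le (t : ℕ) : (pathPtn A B).part t ≤ #B := by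
  rw [pathPtn_part]
  rcases lt_or_ge t (A.sort (· ≤ ·)).length with ht | ht
  · rw [List.getD_eq_getElem _ _ (by simpa using ht), List.getElem_map]
    exact card_filter_le _ _
  · rw [List.getD_eq_default _ _ (by simpa using ht)]
    exact Nat.zero_le _

lemma card_filter_parts_pathPtn (i : ℕ) :
    Multiset.card ((pathPtn A B).parts.filter (i < ·)) =
      #(A.filter fun a => i < #(B.filter (a < ·))) := by
  rw [pathPtn, Ptn.of, Multiset.filter_filter]
  simp only [show ∀ x, (i < x ∧ 0 < x) ↔ i < x from fun x => ⟨And.left, fun h => ⟨h, by omega⟩⟩]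
  rw [Multiset.filter_map, Multiset.card_map]
  rfl

theorem complementary_pathPtn (hAB : Disjoint A B) :
    Complementary #A #B (pathPtn A B) (pathPtn B A).conj := by
  refine ⟨pathPtn_length_le A B, pathPtn_part_le A B 0,
    (Ptn.length_conj_le _).trans (pathPtn_part_le B A 0), fun i hi => ?_⟩
  have hlen : #A - 1 - i < (A.sort (· ≤ ·)).length := by rw [length_sort]; omega
  set w := (A.sort (· ≤ ·))[#A - 1 - i]
  have hwA : w ∈ A := (mem_sort _).mp (List.getElem_mem _)
  have hwB : w ∉ B := disjoint_left.mp hAB hwA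
  have hrank : #(A.filter (w < ·)) = i := by
    rw [card_filter_lt_sort_getElem A (by simpa using hlen)]
    omega
  have hpart : (pathPtn A B).part (#A - 1 - i) = #(B.filter (w < ·)) := by
    rw [pathPtn_part, List.getD_eq_getElem _ _ (by simpa using hlen), List.getElem_map]
  have hbelow : B.filter (fun b => i < #(A.filter (b < ·))) = B.filter (· < w) := by
    refine filter_congr fun b hb => ⟨fun h => ?_, fun h => ?_⟩
    · have hbw : b ≠ w := fun hbw => hwB (hbw ▸ hb)
      by_contra hwb
      have : #(A.filter (b < ·)) ≤ #(A.filter (w < ·)) :=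
        antitone_card_filter_lt A (show w ≤ b by omega)
      omega
    · exact hrank ▸ card_filter_lt_lt_of_lt A hwA h
  have hsplit : #(B.filter (· < w)) + #(B.filter (w < ·)) = #B := by
    rw [← card_filter_add_card_filter_not (s := B) (· < w)]
    congr 2
    refine filter_congr fun b hb => ?_
    have hbw : b ≠ w := fun hbw => hwB (hbw ▸ hb)
    omega
  rw [Ptn.conj_part, card_filter_parts_pathPtn, hbelow, hpart]
  omega

end LatticePath

section Beads

lemma ptnOfBeads_range_union_map_addLeft (c : ℕ) (T : Finset ℕ) :
    ptnOfBeads (range c ∪ T.map (addLeftEmbedding c)) = ptnOfBeads T := by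
  set B := range c ∪ T.map (addLeftEmbedding c)
  have hdisj : Disjoint (range c) (T.map (addLeftEmbedding c)) := by
    simp only [disjoint_left, mem_range, mem_map, addLeftEmbedding_apply, not_exists, not_and]
    omega
  have hlow : ∀ p < c, #(B.filter (· < p)) = p := by
    intro p hp
    have : B.filter (· < p) = range p := by
      ext x
      simp only [B, mem_filter, mem_union, mem_range, mem_map, addLeftEmbedding_apply]
      constructor
      · rintro ⟨_, hx⟩; exact hx
      · intro hx; exact ⟨Or.inl (by omega), hx⟩
    rw [this, card_range]
  have hhigh : ∀ q ∈ T, #(B.filter (· < c + q)) = c + #(T.filter (· < q)) := by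
    intro q _
    have hsplit : B.filter (· < c + q) =
        (range c).disjUnion ((T.filter (· < q)).map (addLeftEmbedding c))
          (hdisj.mono_right (map_subset_map.mpr (filter_subset _ _))) := by
      ext x
      simp only [B, mem_filter, mem_union, mem_range, mem_map, addLeftEmbedding_apply,
        mem_disjUnion]
      constructor
      · rintro ⟨hx | ⟨y, hy, rfl⟩, hlt⟩
        · exact Or.inl hx
        · exact Or.inr ⟨y, ⟨hy, by omega⟩, rfl⟩
      · rintro (hx | ⟨y, ⟨hy, hlt⟩, rfl⟩)
        · exact ⟨Or.inl hx, by omega⟩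
        · exact ⟨Or.inr ⟨y, hy, rfl⟩, by omega⟩
    rw [hsplit, card_disjUnion, card_range, card_map]
  ext1
  have hval : B.val = (range c).val + (T.map (addLeftEmbedding c)).val := by
    rw [show B = (range c).disjUnion _ hdisj from (disjUnion_eq_union _ _ hdisj).symm]
    rfl
  simp only [ptnOfBeads, Ptn.of]
  rw [hval, Multiset.map_add, Multiset.filter_add, map_val, Multiset.map_map,
    Multiset.filter_eq_nil.mpr fun a ha => ?_, zero_add]
  · congr 1
    refine Multiset.map_congr rfl fun q hq => ?_
    simp only [Function.comp_apply, addLeftEmbedding_apply, hhigh q hq]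
    omega
  · obtain ⟨p, hp, rfl⟩ := Multiset.mem_map.mp ha
    rw [hlow p (mem_range.mp hp)]
    omega

lemma ptnOfBeads_image_sub {n : ℕ} {S : Finset ℕ} (hS : S ⊆ range (n + 1)) :
    ptnOfBeads (S.image (n - ·)) = pathPtn S (range (n + 1) \ S) := by
  have hle : ∀ i ∈ S, i ≤ n := fun i hi => Nat.lt_succ_iff.mp (mem_range.mp (hS hi))
  have hinj : Set.InjOn (n - ·) S := fun a ha b hb hab => by
    have := hle a ha; have := hle b hb; simp only at hab; omega
  rw [ptnOfBeads, pathPtn, image_val_of_injOn hinj, Multiset.map_map]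
  congr 1
  refine Multiset.map_congr rfl fun i hi => ?_
  have hin := hle i hi
  have hbelow : (S.image (n - ·)).filter (· < n - i) = (S.filter (i < ·)).image (n - ·) := by
    rw [filter_image]
    congr 1
    refine filter_congr fun j hj => ?_
    have := hle j hj
    omega
  have habove : (range (n + 1) \ S).filter (i < ·) = Ioc i n \ S.filter (i < ·) := by
    ext j
    simp only [mem_filter, mem_sdiff, mem_range, mem_Ioc]
    constructor
    · rintro ⟨⟨hj, hjS⟩, hij⟩; exact ⟨⟨hij, by omega⟩, fun h => hjS h.1⟩
    · rintro ⟨⟨hij, hjn⟩, hjS⟩; exact ⟨⟨by omega, fun h => hjS ⟨h, hij⟩⟩, hij⟩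
  have hsub : S.filter (i < ·) ⊆ Ioc i n := fun j hj => by
    rw [mem_filter] at hj
    exact mem_Ioc.mpr ⟨hj.2, hle j hj.1⟩
  simp only [Function.comp_apply]
  rw [hbelow, habove, card_image_of_injOn (hinj.mono (coe_subset.mpr (filter_subset _ _))),
    card_sdiff_of_subset hsub, Nat.card_Ioc]

end Beads

lemma mem_betaSet_iff {l : Ptn} {L N : ℕ} (hLN : L ≤ N) (hzero : ∀ i, L ≤ i → l.part i = 0)
    (x : ℕ) : x ∈ betaSet l N ↔ x < N - L ∨ ∃ i < L, x = l.part i + (N - 1 - i) := by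
  simp only [betaSet, mem_image, mem_range]
  constructor
  · rintro ⟨i, hi, rfl⟩
    rcases lt_or_ge i L with hiL | hiL
    · exact Or.inr ⟨i, hiL, rfl⟩
    · rw [hzero i hiL]
      omega
  · rintro (hx | ⟨i, hi, rfl⟩)
    · exact ⟨N - 1 - x, by omega, by rw [hzero _ (by omega)]; omega⟩
    · exact ⟨i, by omega, rfl⟩

section Staircase

variable {ℓ : ℕ} {l : Ptn}

def rowsWithExcess (l : Ptn) (ℓ k : ℕ) : Finset ℕ :=
  (range (ℓ + 1)).filter fun i => l.part i = ℓ - i + k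

lemma part_bounds_of_contains (hlow : Contains l (DelP ℓ))
    (hup : Contains (DelP (ℓ + 1)) l) (i : ℕ) : ℓ - i ≤ l.part i ∧ l.part i ≤ ℓ + 1 - i :=
  ⟨by simpa [delP_part] using hlow i, by simpa [delP_part] using hup i⟩

lemma range_sdiff_rowsWithExcess (hlow : Contains l (DelP ℓ))
    (hup : Contains (DelP (ℓ + 1)) l) {k : ℕ} (hk : k < 2) :
    range (ℓ + 1) \ rowsWithExcess l ℓ k = rowsWithExcess l ℓ (1 - k) := by
  ext i
  simp only [rowsWithExcess, mem_sdiff, mem_filter, mem_range]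
  have := part_bounds_of_contains hlow hup i
  constructor
  · rintro ⟨hi, hne⟩
    exact ⟨hi, by omega⟩
  · rintro ⟨hi, heq⟩
    exact ⟨hi, fun h => by omega⟩

lemma length_eq_of_contains (hlow : Contains l (DelP ℓ))
    (hup : Contains (DelP (ℓ + 1)) l) (hℓ : 1 ≤ ℓ) : l.length = ℓ + l.part ℓ := by
  have h1 := l.part_pos_iff (ℓ - 1)
  have h2 := l.part_pos_iff ℓ
  have h3 := l.part_pos_iff (ℓ + 1)
  have := part_bounds_of_contains hlow hup (ℓ - 1)
  have := part_bounds_of_contains hlow hup ℓ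
  have := part_bounds_of_contains hlow hup (ℓ + 1)
  omega

/-- Row `i ≤ ℓ` has beta-number `2 (h + l.part ℓ + (ℓ - i)) + (l.part i - (ℓ - i))`, and the
empty rows `i > ℓ` give the beta-numbers smaller than `2 (h + l.part ℓ)`. -/
lemma runnerLevels_two_of_contains (hlow : Contains l (DelP ℓ))
    (hup : Contains (DelP (ℓ + 1)) l) {h : ℕ} (hℓ : ℓ = 2 * h + 1) {k : ℕ} (hk : k < 2) :
    runnerLevels 2 l k = range (h + l.part ℓ) ∪
      ((rowsWithExcess l ℓ k).image (ℓ - ·)).map (addLeftEmbedding (h + l.part ℓ)) := by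
  have hb := part_bounds_of_contains hlow hup
  have hlen := length_eq_of_contains hlow hup (by omega)
  have hbeta := mem_betaSet_iff (l := l) (L := ℓ + 1) (N := 2 * l.length) (by omega)
    fun i hi => by have := hb i; omega
  have he := hb ℓ
  ext s
  simp only [runnerLevels, mem_filter, mem_range, hbeta, mem_union, mem_map, mem_image,
    rowsWithExcess, addLeftEmbedding_apply]
  constructor
  · rintro ⟨-, hs | ⟨i, hi, hs⟩⟩
    · left; omega
    · have := hb i
      right
      exact ⟨ℓ - i, ⟨i, ⟨by omega, by omega⟩, rfl⟩, by omega⟩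
  · rintro (hs | ⟨_, ⟨i, ⟨hi, hpi⟩, rfl⟩, rfl⟩)
    · exact ⟨by omega, Or.inl (by omega)⟩
    · exact ⟨by omega, Or.inr ⟨i, hi, by omega⟩⟩

lemma quotP_two_of_contains (hlow : Contains l (DelP ℓ))
    (hup : Contains (DelP (ℓ + 1)) l) {h : ℕ} (hℓ : ℓ = 2 * h + 1) {k : ℕ} (hk : k < 2) :
    quotP 2 l k = pathPtn (rowsWithExcess l ℓ k) (rowsWithExcess l ℓ (1 - k)) := by
  rw [quotP, runnerLevels_two_of_contains hlow hup hℓ hk, ptnOfBeads_range_union_map_addLeft,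
    ptnOfBeads_image_sub (S := rowsWithExcess l ℓ k) (filter_subset _ _),
    range_sdiff_rowsWithExcess hlow hup hk]

end Staircase

section F1Del

variable {ℓ m : ℕ} {μ : Ptn}

lemma contains_delP_succ_of_mem_F1Del (hodd : Odd ℓ) (hμ : μ ∈ F1Del ℓ m) :
    Contains (DelP (ℓ + 1)) μ := by
  obtain ⟨-, -, hlab⟩ := hμ
  -- the first cell `(ℓ + 1, 0)` of row `ℓ + 1` is labelled `0`
  have hrow : μ.part (ℓ + 1) = 0 := by
    by_contra hpos
    have := hlab (ℓ + 1) 0 (by rw [delP_part]; omega) (by omega)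
    obtain ⟨h, rfl⟩ := hodd
    omega
  intro i
  rw [delP_part]
  rcases le_or_gt i ℓ with hi | hi
  · -- the cells `(i, ℓ - i)` and `(i, ℓ - i + 1)` carry different labels
    by_contra hgt
    have h1 := hlab i (ℓ - i) (by rw [delP_part]) (by omega)
    have h2 := hlab i (ℓ - i + 1) (by rw [delP_part]; omega) (by omega)
    omega
  · have := μ.part_pos_iff i
    have := μ.part_pos_iff (ℓ + 1)
    omega

lemma card_rowsWithExcess_one_of_mem_F1Del (hodd : Odd ℓ) (hμ : μ ∈ F1Del ℓ m) :
    #(rowsWithExcess μ ℓ 1) = m := by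
  have hup := contains_delP_succ_of_mem_F1Del hodd hμ
  obtain ⟨hlow, hsize, -⟩ := hμ
  have hb := part_bounds_of_contains hlow hup
  have hlenμ : μ.length ≤ ℓ + 1 := by
    have := μ.part_pos_iff (ℓ + 1); have := hb (ℓ + 1); omega
  have hlenΔ : (DelP ℓ).length ≤ ℓ + 1 := by
    have := (DelP ℓ).part_pos_iff (ℓ + 1); rw [delP_part] at this; omega
  have hsum : ∑ i ∈ range (ℓ + 1), μ.part i =
      ∑ i ∈ range (ℓ + 1), ((DelP ℓ).part i + if μ.part i = ℓ - i + 1 then 1 else 0) :=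
    sum_congr rfl fun i _ => by
      have := hb i
      rw [delP_part]
      split_ifs <;> omega
  rw [μ.size_eq_sum_part hlenμ, (DelP ℓ).size_eq_sum_part hlenΔ, hsum, sum_add_distrib,
    sum_boole] at hsize
  simpa [rowsWithExcess] using hsize

end F1Del

theorem stmt12_general (ℓ m : ℕ) (hodd : Odd ℓ) (μ : Ptn) (hμ : μ ∈ F1Del ℓ m) :
    Complementary (ℓ + 1 - m) m (quotP 2 μ 0) ((quotP 2 μ 1).conj) := by
  obtain ⟨h, hℓ⟩ := id hodd
  have hlow : Contains μ (DelP ℓ) := hμ.1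
  have hup := contains_delP_succ_of_mem_F1Del hodd hμ
  have hcard1 := card_rowsWithExcess_one_of_mem_F1Del hodd hμ
  have hcard0 : #(rowsWithExcess μ ℓ 0) = ℓ + 1 - m := by
    have := range_sdiff_rowsWithExcess hlow hup one_lt_two
    rw [Nat.sub_self] at this
    have hsub : rowsWithExcess μ ℓ 1 ⊆ range (ℓ + 1) := filter_subset _ _
    rw [← this, card_sdiff_of_subset hsub, card_range, hcard1]
  have hdisj : Disjoint (rowsWithExcess μ ℓ 0) (rowsWithExcess μ ℓ 1) :=
    disjoint_filter.mpr fun _ _ h0 h1 => by omega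
  rw [quotP_two_of_contains hlow hup hℓ two_pos, quotP_two_of_contains hlow hup hℓ one_lt_two,
    Nat.sub_zero, Nat.sub_self, ← hcard0, ← hcard1]
  exact complementary_pathPtn _ _ hdisj

/-- The combinatorial step in the proof of Theorem 4.1: for odd `ℓ`, `0 ≤ m ≤ ℓ`,
and `μ ∈ F_1^m(Δ_ℓ)`, the pair `(μ[0], (μ[1])')` is complementary relative to the
rectangle `□(ℓ+1-m, m)`. -/
theorem stmt12 (ℓ m : ℕ) (hodd : Odd ℓ) (hm : m ≤ ℓ) (μ : Ptn) (hμ : μ ∈ F1Del ℓ m) :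
    Complementary (ℓ + 1 - m) m (quotP 2 μ 0) ((quotP 2 μ 1).conj) :=
  stmt12_general ℓ m hodd μ hμ
end
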